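/- arXiv:2102.04761 — 8 statements merged into one kernel-verified Lean document; each statement's English description precedes it below -/
import Mathlib

section
/- (One-step consensus change.) Let each f_i : ℝ^d → ℝ be L-smooth, f := (1/n)∑_i f_i, and assume (1/n)∑_{i=1}^n ‖∇f_i(y) − ∇f(y)‖² ≤ ζ² for all y ∈ ℝ^d. Let W ∈ ℝ^{n×n} be doubly stochastic and satisfy ‖ZW − Z̄‖_F² ≤ (1−ρ)‖Z − Z̄‖_F² for all Z ∈ ℝ^{d×n}. Let X, M ∈ ℝ^{d×n} be deterministic with column averages x̄ of X, and let G be a random matrix whose columns g_1,…,g_n are independent with E[g_i] = ∇f_i(x_i) and E‖g_i − ∇f_i(x_i)‖² ≤ σ², where x_i is the i-th column of X. Define X⁺ := (X − η(βM + G))W. If η ≤ ρ/(7L), then (1/n)E‖X⁺ − X̄⁺‖_F² ≤ ((1 − ρ/4)/n)‖X − X̄‖_F² + 12η²ζ²/ρ + 4(1−ρ)η²σ² + (6η²β²/(ρn))‖M − M̄‖_F². -/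
open MeasureTheory ProbabilityTheory Finset

noncomputable section

/-!
Gossip averaging with a row-stochastic `W` preserves the column mean, so the contraction
hypothesis bounds the new consensus distance by `(1 - ρ)` times that of
`Z := X - η(βM + G)`. Since the mean minimises `c ↦ ∑ⱼ ‖Zⱼ - c‖²`, `Z` may be centred at the
deterministic point `x̄ - η(βm̄ + ḡ)` instead of at its random mean; then
`Zⱼ - c = Dⱼ - η ξⱼ` with `D` deterministic and `ξⱼ = gⱼ - ∇fⱼ(xⱼ)` of mean zero, so the cross
terms vanish in expectation and `E ∑ⱼ ‖Zⱼ - c‖² = ∑ⱼ ‖Dⱼ‖² + η² ∑ⱼ E‖ξⱼ‖²`. Young's inequality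
with weight `ρ/2` splits `∑ⱼ ‖Dⱼ‖²`, smoothness and the heterogeneity bound control the
gradient part, and `η ≤ ρ/(7L)` absorbs the resulting `12η²L²/ρ` into `ρ/4`.
-/

open RealInnerProductSpace

section Consensus

variable {E : Type*} [NormedAddCommGroup E] [InnerProductSpace ℝ E] {n : ℕ}

def colMean (Z : Fin n → E) : E := (n : ℝ)⁻¹ • ∑ i, Z i

def consensusDist (Z : Fin n → E) : ℝ := ∑ j, ‖Z j - colMean Z‖ ^ 2

lemma consensusDist_nonneg (Z : Fin n → E) : 0 ≤ consensusDist Z :=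
  sum_nonneg fun _ _ => sq_nonneg _

lemma card_smul_colMean (Z : Fin n → E) : (n : ℝ) • colMean Z = ∑ i, Z i := by
  rcases n.eq_zero_or_pos with rfl | hn
  · simp
  · rw [colMean, smul_smul, mul_inv_cancel₀ (by positivity), one_smul]

lemma sum_norm_sub_sq_eq_consensusDist_add (Z : Fin n → E) (c : E) :
    ∑ j, ‖Z j - c‖ ^ 2 = consensusDist Z + n * ‖colMean Z - c‖ ^ 2 := by
  have hcross : ∑ j, ⟪Z j - colMean Z, colMean Z - c⟫ = 0 := by
    rw [← sum_inner, sum_sub_distrib, ← card_smul_colMean, sum_const, card_univ,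
      Fintype.card_fin, Nat.cast_smul_eq_nsmul, sub_self, inner_zero_left]
  calc ∑ j, ‖Z j - c‖ ^ 2 = ∑ j, ‖(Z j - colMean Z) + (colMean Z - c)‖ ^ 2 := by
        simp only [sub_add_sub_cancel]
    _ = consensusDist Z + 2 * ∑ j, ⟪Z j - colMean Z, colMean Z - c⟫
          + n * ‖colMean Z - c‖ ^ 2 := by
        simp only [norm_add_sq_real, sum_add_distrib, ← mul_sum, sum_const, card_univ,
          Fintype.card_fin, nsmul_eq_mul, consensusDist]
    _ = _ := by rw [hcross]; ring

lemma consensusDist_le_sum_norm_sub_sq (Z : Fin n → E) (c : E) :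
    consensusDist Z ≤ ∑ j, ‖Z j - c‖ ^ 2 := by
  rw [sum_norm_sub_sq_eq_consensusDist_add]
  exact le_add_of_nonneg_right (by positivity)

lemma colMean_gossip {W : Matrix (Fin n) (Fin n) ℝ} (hW : ∀ i, ∑ j, W i j = 1)
    (Z : Fin n → E) : colMean (fun j => ∑ i, W i j • Z i) = colMean Z := by
  simp only [colMean, sum_comm (γ := Fin n), ← sum_smul, hW, one_smul]

lemma consensusDist_gossip_le {W : Matrix (Fin n) (Fin n) ℝ} {ρ : ℝ} (hW : ∀ i, ∑ j, W i j = 1)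
    (hρ1 : ρ ≤ 1)
    (hcontr : ∀ Z : Fin n → E,
      ∑ j, ‖∑ i, W i j • Z i - colMean Z‖ ^ 2 ≤ (1 - ρ) * consensusDist Z)
    (Z : Fin n → E) (c : E) :
    consensusDist (fun j => ∑ i, W i j • Z i) ≤ (1 - ρ) * ∑ j, ‖Z j - c‖ ^ 2 := by
  rw [consensusDist, colMean_gossip hW]
  exact (hcontr Z).trans
    (mul_le_mul_of_nonneg_left (consensusDist_le_sum_norm_sub_sq Z c) (by linarith))

lemma consensusDist_comp_le {G : Fin n → E → E} {c : E → E} {L ζ : ℝ}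
    (hG : ∀ i u v, ‖G i u - G i v‖ ≤ L * ‖u - v‖)
    (hζ : ∀ y, (n : ℝ)⁻¹ * ∑ i, ‖G i y - c y‖ ^ 2 ≤ ζ ^ 2) (X : Fin n → E) :
    consensusDist (fun i => G i (X i)) ≤ 2 * L ^ 2 * consensusDist X + 2 * n * ζ ^ 2 := by
  set x := colMean X
  have hhet : ∑ i, ‖G i x - c x‖ ^ 2 ≤ n * ζ ^ 2 := by
    rcases n.eq_zero_or_pos with rfl | hn
    · simp
    · simpa [← mul_assoc, mul_inv_cancel₀ (by positivity : (n : ℝ) ≠ 0)] using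
        mul_le_mul_of_nonneg_left (hζ x) (Nat.cast_nonneg n)
  have hterm : ∀ i,
      ‖G i (X i) - c x‖ ^ 2 ≤ 2 * L ^ 2 * ‖X i - x‖ ^ 2 + 2 * ‖G i x - c x‖ ^ 2 := fun i =>
    calc ‖G i (X i) - c x‖ ^ 2 ≤ (L * ‖X i - x‖ + ‖G i x - c x‖) ^ 2 := by
          gcongr
          exact (norm_sub_le_norm_sub_add_norm_sub _ (G i x) _).trans (by gcongr; exact hG i _ _)
      _ ≤ 2 * ((L * ‖X i - x‖) ^ 2 + ‖G i x - c x‖ ^ 2) := add_sq_le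
      _ = _ := by ring
  calc consensusDist (fun i => G i (X i)) ≤ ∑ i, ‖G i (X i) - c x‖ ^ 2 :=
        consensusDist_le_sum_norm_sub_sq _ _
    _ ≤ ∑ i, (2 * L ^ 2 * ‖X i - x‖ ^ 2 + 2 * ‖G i x - c x‖ ^ 2) :=
        sum_le_sum fun i _ => hterm i
    _ ≤ 2 * L ^ 2 * consensusDist X + 2 * n * ζ ^ 2 := by
        rw [sum_add_distrib, ← mul_sum, ← mul_sum]
        unfold consensusDist
        linarith

end Consensus

lemma norm_sub_sq_le_weighted {F : Type*} [SeminormedAddCommGroup F] (a b : F) {t : ℝ}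
    (ht : 0 < t) : ‖a - b‖ ^ 2 ≤ (1 + t) * ‖a‖ ^ 2 + (1 + t⁻¹) * ‖b‖ ^ 2 :=
  calc ‖a - b‖ ^ 2 ≤ (‖a‖ + ‖b‖) ^ 2 := by gcongr; exact norm_sub_le a b
    _ ≤ (‖a‖ + ‖b‖) ^ 2 + t⁻¹ * (t * ‖a‖ - ‖b‖) ^ 2 := le_add_of_nonneg_right (by positivity)
    _ = _ := by field_simp; ring

lemma sum_norm_sub_smul_sub_smul_sq_le {ι F : Type*} [Fintype ι] [SeminormedAddCommGroup F]
    [NormedSpace ℝ F] (a b c : ι → F) (s r : ℝ) {t : ℝ} (ht : 0 < t) :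
    ∑ j, ‖a j - s • b j - r • c j‖ ^ 2
      ≤ (1 + t) * ∑ j, ‖a j‖ ^ 2
        + 2 * (1 + t⁻¹) * (s ^ 2 * ∑ j, ‖b j‖ ^ 2 + r ^ 2 * ∑ j, ‖c j‖ ^ 2) := by
  have hterm : ∀ j, ‖a j - s • b j - r • c j‖ ^ 2
      ≤ (1 + t) * ‖a j‖ ^ 2 + 2 * (1 + t⁻¹) * (s ^ 2 * ‖b j‖ ^ 2 + r ^ 2 * ‖c j‖ ^ 2) :=
    fun j => calc
      ‖a j - s • b j - r • c j‖ ^ 2 = ‖a j - (s • b j + r • c j)‖ ^ 2 := by rw [sub_sub]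
      _ ≤ (1 + t) * ‖a j‖ ^ 2 + (1 + t⁻¹) * ‖s • b j + r • c j‖ ^ 2 :=
        norm_sub_sq_le_weighted _ _ ht
      _ ≤ (1 + t) * ‖a j‖ ^ 2 + (1 + t⁻¹) * (2 * (‖s • b j‖ ^ 2 + ‖r • c j‖ ^ 2)) := by
        gcongr
        exact (pow_le_pow_left₀ (norm_nonneg _) (norm_add_le _ _) 2).trans add_sq_le
      _ = _ := by simp only [norm_smul, mul_pow, Real.norm_eq_abs, sq_abs]; ring
  refine (sum_le_sum fun j _ => hterm j).trans_eq ?_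
  simp only [sum_add_distrib, ← mul_sum]

section Expectation

variable {Ω E : Type*} [MeasurableSpace Ω] {P : Measure Ω} [IsProbabilityMeasure P]
  [NormedAddCommGroup E] [InnerProductSpace ℝ E] {Y : Ω → E}

lemma norm_sub_smul_sq (a y : E) (t : ℝ) :
    ‖a - t • y‖ ^ 2 = ‖a‖ ^ 2 - 2 * t * ⟪a, y⟫ + t ^ 2 * ‖y‖ ^ 2 := by
  rw [norm_sub_sq_real, inner_smul_right, norm_smul, Real.norm_eq_abs, mul_pow, sq_abs]
  ring

lemma integrable_norm_sub_smul_sq (hY : Integrable Y P)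
    (hY2 : Integrable (fun ω => ‖Y ω‖ ^ 2) P) (a : E) (t : ℝ) :
    Integrable (fun ω => ‖a - t • Y ω‖ ^ 2) P := by
  simp only [norm_sub_smul_sq]
  exact ((integrable_const _).sub ((hY.const_inner a).const_mul _)).add (hY2.const_mul _)

lemma integral_norm_sub_smul_sq [CompleteSpace E] (hY : Integrable Y P)
    (hY0 : ∫ ω, Y ω ∂P = 0) (hY2 : Integrable (fun ω => ‖Y ω‖ ^ 2) P) (a : E) (t : ℝ) :
    ∫ ω, ‖a - t • Y ω‖ ^ 2 ∂P = ‖a‖ ^ 2 + t ^ 2 * ∫ ω, ‖Y ω‖ ^ 2 ∂P := by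
  have hinner : Integrable (fun ω => 2 * t * ⟪a, Y ω⟫) P := (hY.const_inner a).const_mul _
  have hlin : Integrable (fun ω => ‖a‖ ^ 2 - 2 * t * ⟪a, Y ω⟫) P :=
    (integrable_const _).sub hinner
  simp only [norm_sub_smul_sq]
  rw [integral_add hlin (hY2.const_mul _), integral_sub (integrable_const _) hinner,
    integral_const_mul, integral_const_mul, integral_inner hY, hY0]
  simp

lemma integral_sum_norm_sub_smul_sq [CompleteSpace E] {ι : Type*} [Fintype ι] {Y : ι → Ω → E}
    (hY : ∀ j, Integrable (Y j) P) (hY0 : ∀ j, ∫ ω, Y j ω ∂P = 0)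
    (hY2 : ∀ j, Integrable (fun ω => ‖Y j ω‖ ^ 2) P) (D : ι → E) (t : ℝ) :
    ∫ ω, ∑ j, ‖D j - t • Y j ω‖ ^ 2 ∂P = ∑ j, ‖D j‖ ^ 2 + t ^ 2 * ∑ j, ∫ ω, ‖Y j ω‖ ^ 2 ∂P := by
  rw [integral_finsetSum _ fun j _ => integrable_norm_sub_smul_sq (hY j) (hY2 j) _ _]
  simp only [integral_norm_sub_smul_sq (hY _) (hY0 _) (hY2 _), sum_add_distrib, ← mul_sum]

end Expectation

lemma one_step_bound_of_estimates {n : ℕ} (hn : 0 < n) {L σ ζ ρ η β A B C S I : ℝ}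
    (hL : 0 < L) (hρ : 0 < ρ) (hρ1 : ρ ≤ 1) (hη : 0 < η) (hstep : η ≤ ρ / (7 * L))
    (hA : 0 ≤ A) (hB : 0 ≤ B)
    (hI : I ≤ (1 - ρ) * (S + η ^ 2 * (n * σ ^ 2)))
    (hS : S ≤ (1 + ρ / 2) * A + 2 * (1 + (ρ / 2)⁻¹) * ((η * β) ^ 2 * B + η ^ 2 * C))
    (hC : C ≤ 2 * L ^ 2 * A + 2 * n * ζ ^ 2) :
    (n : ℝ)⁻¹ * I ≤ ((1 - ρ / 4) / n) * A + 12 * η ^ 2 * ζ ^ 2 / ρ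
      + 4 * (1 - ρ) * η ^ 2 * σ ^ 2 + (6 * η ^ 2 * β ^ 2 / (ρ * n)) * B := by
  have hcoef : (1 - ρ) * (2 * (1 + (ρ / 2)⁻¹)) ≤ 6 / ρ := by
    rw [inv_div, le_div_iff₀ hρ]
    field_simp
    nlinarith
  have hLη : 12 * η ^ 2 * L ^ 2 / ρ ≤ ρ / 4 := by
    have h7 : η * (7 * L) ≤ ρ := (le_div_iff₀ (by positivity)).1 hstep
    rw [div_le_div_iff₀ hρ (by norm_num)]
    nlinarith [mul_pos hη hL]
  set K := (η * β) ^ 2 * B + η ^ 2 * (2 * L ^ 2 * A + 2 * n * ζ ^ 2)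
  have hK : 0 ≤ K := by positivity
  have hSK : (1 - ρ) * S ≤ (1 - ρ / 2) * A + 6 / ρ * K :=
    calc (1 - ρ) * S ≤ (1 - ρ) * ((1 + ρ / 2) * A + 2 * (1 + (ρ / 2)⁻¹) * K) := by
          refine mul_le_mul_of_nonneg_left (hS.trans ?_) (by linarith)
          simp only [K]
          gcongr
      _ ≤ (1 - ρ / 2) * A + 6 / ρ * K := by
          nlinarith [mul_le_mul_of_nonneg_right hcoef hK, mul_nonneg (sq_nonneg ρ) hA]
  have hKA : 6 / ρ * K = 6 * η ^ 2 * β ^ 2 / ρ * B + 12 * η ^ 2 * L ^ 2 / ρ * A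
      + 12 * η ^ 2 * ζ ^ 2 / ρ * n := by
    simp only [K]; ring
  have hσ : 0 ≤ (1 - ρ) * (η ^ 2 * (n * σ ^ 2)) := mul_nonneg (by linarith) (by positivity)
  have key : I ≤ (1 - ρ / 4) * A + 12 * η ^ 2 * ζ ^ 2 / ρ * n
      + 4 * (1 - ρ) * η ^ 2 * σ ^ 2 * n + 6 * η ^ 2 * β ^ 2 / ρ * B := by
    nlinarith [mul_le_mul_of_nonneg_right hLη hA]
  calc (n : ℝ)⁻¹ * I ≤ (n : ℝ)⁻¹ * ((1 - ρ / 4) * A + 12 * η ^ 2 * ζ ^ 2 / ρ * n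
        + 4 * (1 - ρ) * η ^ 2 * σ ^ 2 * n + 6 * η ^ 2 * β ^ 2 / ρ * B) := by gcongr
    _ = _ := by field_simp

theorem one_step_consensus_change_general
    {Ω : Type*} [MeasurableSpace Ω] (P : Measure Ω) [IsProbabilityMeasure P]
    (d n : ℕ) (hn : 0 < n) (L σ ζ ρ η β : ℝ) (hL : 0 < L)
    (hρ : 0 < ρ) (hρ1 : ρ ≤ 1) (hη : 0 < η)
    (f : Fin n → EuclideanSpace ℝ (Fin d) → ℝ)
    (hsmooth : ∀ i u v, ‖gradient (f i) u - gradient (f i) v‖ ≤ L * ‖u - v‖)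
    (hhet : ∀ y : EuclideanSpace ℝ (Fin d),
      (n : ℝ)⁻¹ * ∑ i, ‖gradient (f i) y
          - gradient (fun z => (n : ℝ)⁻¹ * ∑ j, f j z) y‖ ^ 2 ≤ ζ ^ 2)
    (W : Matrix (Fin n) (Fin n) ℝ)
    (hWrow : ∀ i, ∑ j, W i j = 1)
    (hWcontr : ∀ Z : Fin n → EuclideanSpace ℝ (Fin d),
      ∑ j, ‖(∑ i, W i j • Z i) - (n : ℝ)⁻¹ • ∑ i, Z i‖ ^ 2
        ≤ (1 - ρ) * ∑ j, ‖Z j - (n : ℝ)⁻¹ • ∑ i, Z i‖ ^ 2)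
    (X M : Fin n → EuclideanSpace ℝ (Fin d))
    (g : Fin n → Ω → EuclideanSpace ℝ (Fin d))
    (hint : ∀ i, Integrable (g i) P)
    (hmean : ∀ i, ∫ ω, g i ω ∂P = gradient (f i) (X i))
    (hvarint : ∀ i, Integrable (fun ω => ‖g i ω - gradient (f i) (X i)‖ ^ 2) P)
    (hvar : ∀ i, ∫ ω, ‖g i ω - gradient (f i) (X i)‖ ^ 2 ∂P ≤ σ ^ 2)
    (hstep : η ≤ ρ / (7 * L))
    (Xp : Ω → Fin n → EuclideanSpace ℝ (Fin d))
    (hXp : ∀ ω j, Xp ω j = ∑ i, W i j • (X i - η • (β • M i + g i ω))) :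
    (n : ℝ)⁻¹ *
        ∫ ω, ∑ j, ‖Xp ω j - (n : ℝ)⁻¹ • ∑ i, Xp ω i‖ ^ 2 ∂P
      ≤ ((1 - ρ / 4) / n) * ∑ j, ‖X j - (n : ℝ)⁻¹ • ∑ i, X i‖ ^ 2
        + 12 * η ^ 2 * ζ ^ 2 / ρ
        + 4 * (1 - ρ) * η ^ 2 * σ ^ 2
        + (6 * η ^ 2 * β ^ 2 / (ρ * n)) * ∑ j, ‖M j - (n : ℝ)⁻¹ • ∑ i, M i‖ ^ 2 := by
  set G := fun i => gradient (f i) (X i)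
  set Y := fun i ω => g i ω - G i
  set D := fun j => (X j - colMean X) - (η * β) • (M j - colMean M) - η • (G j - colMean G)
  have hY : ∀ i, Integrable (Y i) P := fun i => (hint i).sub (integrable_const _)
  have hY0 : ∀ i, ∫ ω, Y i ω ∂P = 0 := fun i => by
    simp [Y, integral_sub (hint i) (integrable_const _), hmean, G]
  have hpoint : ∀ ω, consensusDist (Xp ω) ≤ (1 - ρ) * ∑ j, ‖D j - η • Y j ω‖ ^ 2 := fun ω => by
    rw [show Xp ω = _ from funext (hXp ω)]
    refine (consensusDist_gossip_le hWrow hρ1 hWcontr _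
      (colMean X - η • (β • colMean M + colMean G))).trans_eq ?_
    refine congrArg _ (sum_congr rfl fun j _ => ?_)
    simp only [D, Y]
    congr 2
    module
  have hI : ∫ ω, consensusDist (Xp ω) ∂P
      ≤ (1 - ρ) * (∑ j, ‖D j‖ ^ 2 + η ^ 2 * (n * σ ^ 2)) := calc
    _ ≤ ∫ ω, (1 - ρ) * ∑ j, ‖D j - η • Y j ω‖ ^ 2 ∂P :=
      integral_mono_of_nonneg (ae_of_all _ fun ω => consensusDist_nonneg _)
        ((integrable_finsetSum _ fun j _ =>
          integrable_norm_sub_smul_sq (hY j) (hvarint j) _ _).const_mul _) (ae_of_all _ hpoint)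
    _ = (1 - ρ) * (∑ j, ‖D j‖ ^ 2 + η ^ 2 * ∑ j, ∫ ω, ‖Y j ω‖ ^ 2 ∂P) := by
      rw [integral_const_mul, integral_sum_norm_sub_smul_sq hY hY0 hvarint]
    _ ≤ _ := by
      have : ∑ j, ∫ ω, ‖Y j ω‖ ^ 2 ∂P ≤ ∑ _j : Fin n, σ ^ 2 := sum_le_sum fun j _ => hvar j
      refine mul_le_mul_of_nonneg_left ?_ (by linarith)
      gcongr
      simpa using this
  exact one_step_bound_of_estimates hn hL hρ hρ1 hη hstep (consensusDist_nonneg X)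
    (consensusDist_nonneg M) hI (sum_norm_sub_smul_sub_smul_sq_le _ _ _ _ _ (half_pos hρ))
    (consensusDist_comp_le hsmooth hhet X)

/-- **One-step consensus change.**
Matrices in `ℝ^{d×n}` are represented by their columns, i.e. as families
`Fin n → EuclideanSpace ℝ (Fin d)`; right multiplication by `W` sends the `j`-th
column to `∑ i, W i j • (column i)`, and `‖Z − Z̄‖_F² = ∑ⱼ ‖Zⱼ − (1/n)∑ᵢZᵢ‖²`.
Each `f_i` is `L`-smooth with heterogeneity bound `ζ²`, `W` is doubly
stochastic with gossip contraction parameter `ρ`, `X, M` are deterministic,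
and the columns of `G` are independent with mean `∇f_i(x_i)` and variance
`≤ σ²`.  With `X⁺ := (X − η(βM + G))W` and `η ≤ ρ/(7L)`:
`(1/n)E‖X⁺ − X̄⁺‖_F² ≤ ((1 − ρ/4)/n)‖X − X̄‖_F² + 12η²ζ²/ρ + 4(1−ρ)η²σ²
  + (6η²β²/(ρn))‖M − M̄‖_F²`. -/
theorem one_step_consensus_change
    {Ω : Type*} [MeasurableSpace Ω] (P : Measure Ω) [IsProbabilityMeasure P]
    (d n : ℕ) (hn : 0 < n) (L σ ζ ρ η β : ℝ) (hL : 0 < L)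
    (hρ : 0 < ρ) (hρ1 : ρ ≤ 1) (hη : 0 < η) (hβ0 : 0 ≤ β) (hβ1 : β < 1)
    (f : Fin n → EuclideanSpace ℝ (Fin d) → ℝ)
    (hdiff : ∀ i, Differentiable ℝ (f i))
    (hsmooth : ∀ i u v, ‖gradient (f i) u - gradient (f i) v‖ ≤ L * ‖u - v‖)
    (hhet : ∀ y : EuclideanSpace ℝ (Fin d),
      (n : ℝ)⁻¹ * ∑ i, ‖gradient (f i) y
          - gradient (fun z => (n : ℝ)⁻¹ * ∑ j, f j z) y‖ ^ 2 ≤ ζ ^ 2)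
    (W : Matrix (Fin n) (Fin n) ℝ)
    (hWrow : ∀ i, ∑ j, W i j = 1) (hWcol : ∀ j, ∑ i, W i j = 1)
    (hWcontr : ∀ Z : Fin n → EuclideanSpace ℝ (Fin d),
      ∑ j, ‖(∑ i, W i j • Z i) - (n : ℝ)⁻¹ • ∑ i, Z i‖ ^ 2
        ≤ (1 - ρ) * ∑ j, ‖Z j - (n : ℝ)⁻¹ • ∑ i, Z i‖ ^ 2)
    (X M : Fin n → EuclideanSpace ℝ (Fin d))
    (g : Fin n → Ω → EuclideanSpace ℝ (Fin d))
    (hindep : iIndepFun g P)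
    (hint : ∀ i, Integrable (g i) P)
    (hmean : ∀ i, ∫ ω, g i ω ∂P = gradient (f i) (X i))
    (hvarint : ∀ i, Integrable (fun ω => ‖g i ω - gradient (f i) (X i)‖ ^ 2) P)
    (hvar : ∀ i, ∫ ω, ‖g i ω - gradient (f i) (X i)‖ ^ 2 ∂P ≤ σ ^ 2)
    (hstep : η ≤ ρ / (7 * L))
    (Xp : Ω → Fin n → EuclideanSpace ℝ (Fin d))
    (hXp : ∀ ω j, Xp ω j = ∑ i, W i j • (X i - η • (β • M i + g i ω))) :
    (n : ℝ)⁻¹ *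
        ∫ ω, ∑ j, ‖Xp ω j - (n : ℝ)⁻¹ • ∑ i, Xp ω i‖ ^ 2 ∂P
      ≤ ((1 - ρ / 4) / n) * ∑ j, ‖X j - (n : ℝ)⁻¹ • ∑ i, X i‖ ^ 2
        + 12 * η ^ 2 * ζ ^ 2 / ρ
        + 4 * (1 - ρ) * η ^ 2 * σ ^ 2
        + (6 * η ^ 2 * β ^ 2 / (ρ * n)) * ∑ j, ‖M j - (n : ℝ)⁻¹ • ∑ i, M i‖ ^ 2 :=
  one_step_consensus_change_general P d n hn L σ ζ ρ η β hL hρ hρ1 hη f hsmooth hhet W hWrow hWcontr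
    X M g hint hmean hvarint hvar hstep Xp hXp

end
end

section
/- (One-step error contraction.) Let e ∈ ℝ^d be deterministic, let η > 0 and β, μ ∈ [0,1), and set η̃ := η/(1−β). On a probability space, let ḡ be an integrable random vector in ℝ^d with mean h := E[ḡ] and E‖ḡ − h‖² ≤ σ². Define the random vector e⁺ := (1 − (1−μ)(1−β))e − η̃β ḡ. Then E‖e⁺‖² ≤ (1 − (1−μ)(1−β))‖e‖² + (2η̃²β²/((1−β)(1−μ)))‖h‖² + η̃²β²σ². -/
open MeasureTheory

noncomputable section

open scoped RealInnerProductSpace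

/-- Bias-variance style decomposition of the second moment. -/
lemma second_moment_decomp
    {Ω : Type*} [MeasurableSpace Ω] (P : Measure Ω) [IsProbabilityMeasure P]
    (d : ℕ) (c : ℝ) (u h : EuclideanSpace ℝ (Fin d))
    (g : Ω → EuclideanSpace ℝ (Fin d))
    (hint : Integrable g P)
    (hmean : ∫ ω, g ω ∂P = h)
    (hvarint : Integrable (fun ω => ‖g ω - h‖ ^ 2) P) :
    ∫ ω, ‖u - c • (g ω - h)‖ ^ 2 ∂P
      = ‖u‖ ^ 2 + c ^ 2 * ∫ ω, ‖g ω - h‖ ^ 2 ∂P := by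
  have hgh : Integrable (fun ω => g ω - h) P := hint.sub (integrable_const h)
  have hinner : Integrable (fun ω => ⟪u, g ω - h⟫) P := hgh.const_inner u
  have hpt : ∀ ω, ‖u - c • (g ω - h)‖ ^ 2
      = ‖u‖ ^ 2 - 2 * c * ⟪u, g ω - h⟫ + c ^ 2 * ‖g ω - h‖ ^ 2 := by
    intro ω
    rw [norm_sub_sq_real, real_inner_smul_right, norm_smul]
    simp only [Real.norm_eq_abs, mul_pow, sq_abs]
    ring
  have hmean0 : ∫ ω, (g ω - h) ∂P = 0 := by
    rw [integral_sub hint (integrable_const h), hmean, integral_const]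
    simp
  calc ∫ ω, ‖u - c • (g ω - h)‖ ^ 2 ∂P
      = ∫ ω, (‖u‖ ^ 2 - 2 * c * ⟪u, g ω - h⟫ + c ^ 2 * ‖g ω - h‖ ^ 2) ∂P :=
        integral_congr_ae (Filter.Eventually.of_forall hpt)
    _ = ∫ ω, (‖u‖ ^ 2 - 2 * c * ⟪u, g ω - h⟫) ∂P
          + ∫ ω, c ^ 2 * ‖g ω - h‖ ^ 2 ∂P :=
        integral_add ((integrable_const _).sub
          ((hinner.const_mul (2 * c)))) (hvarint.const_mul _)
    _ = (∫ _ω, (‖u‖ ^ 2 : ℝ) ∂P - ∫ ω, 2 * c * ⟪u, g ω - h⟫ ∂P)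
          + c ^ 2 * ∫ ω, ‖g ω - h‖ ^ 2 ∂P := by
        rw [integral_sub (integrable_const _) (hinner.const_mul (2 * c)),
          integral_const_mul, integral_const_mul]
    _ = ‖u‖ ^ 2 + c ^ 2 * ∫ ω, ‖g ω - h‖ ^ 2 ∂P := by
        rw [integral_const, integral_const_mul, integral_inner hgh, hmean0]
        simp

/-- Young-type deterministic bound. -/
lemma young_bound (δ c x y i : ℝ) (hδpos : 0 < δ) (hδ1 : δ ≤ 1) (hc0 : 0 ≤ c)
    (hi : -(x * y) ≤ i) :
    (1 - δ) ^ 2 * x ^ 2 - 2 * (1 - δ) * c * i + c ^ 2 * y ^ 2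
      ≤ (1 - δ) * x ^ 2 + (c ^ 2 / δ) * y ^ 2 := by
  have hfree : δ * ((c ^ 2 / δ) * y ^ 2) = c ^ 2 * y ^ 2 := by
    field_simp
  have key : δ * ((1 - δ) ^ 2 * x ^ 2 - 2 * (1 - δ) * c * i + c ^ 2 * y ^ 2)
      ≤ δ * ((1 - δ) * x ^ 2 + (c ^ 2 / δ) * y ^ 2) := by
    nlinarith [hfree,
      mul_nonneg (by linarith : (0:ℝ) ≤ 1 - δ) (sq_nonneg (δ * x - c * y)),
      mul_nonneg (mul_nonneg (mul_nonneg hδpos.le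
        (by linarith : (0:ℝ) ≤ 1 - δ)) hc0)
        (by linarith : (0:ℝ) ≤ i + x * y)]
  exact le_of_mul_le_mul_left key hδpos

/-- **One-step error contraction.**
For deterministic `e`, step size `η > 0`, momentum parameters `β, μ ∈ [0,1)`,
`η̃ := η/(1−β)`, and an integrable random vector `ḡ` with mean `h` and
`E‖ḡ − h‖² ≤ σ²`, the random vector
`e⁺ := (1 − (1−μ)(1−β))e − η̃β ḡ` satisfies
`E‖e⁺‖² ≤ (1 − (1−μ)(1−β))‖e‖² + (2η̃²β²/((1−β)(1−μ)))‖h‖² + η̃²β²σ²`. -/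
theorem one_step_error_contraction
    {Ω : Type*} [MeasurableSpace Ω] (P : Measure Ω) [IsProbabilityMeasure P]
    (d : ℕ) (η β μ σ : ℝ) (hη : 0 < η) (hβ0 : 0 ≤ β) (hβ1 : β < 1)
    (hμ0 : 0 ≤ μ) (hμ1 : μ < 1)
    (e h : EuclideanSpace ℝ (Fin d)) (g : Ω → EuclideanSpace ℝ (Fin d))
    (hint : Integrable g P)
    (hmean : ∫ ω, g ω ∂P = h)
    (hvarint : Integrable (fun ω => ‖g ω - h‖ ^ 2) P)
    (hvar : ∫ ω, ‖g ω - h‖ ^ 2 ∂P ≤ σ ^ 2) :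
    ∫ ω, ‖(1 - (1 - μ) * (1 - β)) • e - ((η / (1 - β)) * β) • g ω‖ ^ 2 ∂P
      ≤ (1 - (1 - μ) * (1 - β)) * ‖e‖ ^ 2
        + (2 * (η / (1 - β)) ^ 2 * β ^ 2 / ((1 - β) * (1 - μ))) * ‖h‖ ^ 2
        + (η / (1 - β)) ^ 2 * β ^ 2 * σ ^ 2 := by
  have hβ' : (0:ℝ) < 1 - β := by linarith
  have hμ' : (0:ℝ) < 1 - μ := by linarith
  set δ : ℝ := (1 - μ) * (1 - β) with hδ
  set c : ℝ := (η / (1 - β)) * β with hc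
  have hδpos : 0 < δ := mul_pos hμ' hβ'
  have hδ1 : δ ≤ 1 := by nlinarith
  have hc0 : 0 ≤ c := mul_nonneg (le_of_lt (div_pos hη hβ')) hβ0
  set u : EuclideanSpace ℝ (Fin d) := (1 - δ) • e - c • h with hu
  have hkey : ∫ ω, ‖(1 - δ) • e - c • g ω‖ ^ 2 ∂P
      = ‖u‖ ^ 2 + c ^ 2 * ∫ ω, ‖g ω - h‖ ^ 2 ∂P := by
    have hrw : (fun ω => ‖(1 - δ) • e - c • g ω‖ ^ 2)
        = fun ω => ‖u - c • (g ω - h)‖ ^ 2 := by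
      funext ω
      rw [hu, smul_sub]
      congr 1
      abel
    rw [hrw]
    exact second_moment_decomp P d c u h g hint hmean hvarint
  have hexp : ‖u‖ ^ 2
      = (1 - δ) ^ 2 * ‖e‖ ^ 2 - 2 * (1 - δ) * c * ⟪e, h⟫ + c ^ 2 * ‖h‖ ^ 2 := by
    rw [hu, norm_sub_sq_real, real_inner_smul_left, real_inner_smul_right,
      norm_smul, norm_smul]
    simp only [Real.norm_eq_abs, mul_pow, sq_abs]
    ring
  have hinner : -(‖e‖ * ‖h‖) ≤ ⟪e, h⟫ :=
    (abs_le.mp (abs_real_inner_le_norm e h)).1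
  have hdet : ‖u‖ ^ 2 ≤ (1 - δ) * ‖e‖ ^ 2 + (c ^ 2 / δ) * ‖h‖ ^ 2 := by
    rw [hexp]
    exact young_bound δ c ‖e‖ ‖h‖ ⟪e, h⟫ hδpos hδ1 hc0 hinner
  have hvarbd : c ^ 2 * ∫ ω, ‖g ω - h‖ ^ 2 ∂P ≤ c ^ 2 * σ ^ 2 :=
    mul_le_mul_of_nonneg_left hvar (sq_nonneg c)
  have hc2 : c ^ 2 = (η / (1 - β)) ^ 2 * β ^ 2 := by rw [hc, mul_pow]
  have hden : 2 * (η / (1 - β)) ^ 2 * β ^ 2 / ((1 - β) * (1 - μ))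
      = 2 * (c ^ 2 / δ) := by
    rw [hc2, hδ]
    ring
  have hHnn : 0 ≤ (c ^ 2 / δ) * ‖h‖ ^ 2 :=
    mul_nonneg (div_nonneg (sq_nonneg c) hδpos.le) (sq_nonneg _)
  rw [hkey, hden, ← hc2]
  linarith
end
end

section
/- (Closed-form error recursion.) Let η > 0 and β, μ ∈ [0,1), and let (ḡ^t)_{t≥0} be any sequence in ℝ^d. Define sequences (x̄^t), (m̄^t), (x̂^t) in ℝ^d by m̄^0 = 0, x̂^0 = x̄^0, x̄^{t+1} = x̄^t − η(βm̄^t + ḡ^t), m̄^{t+1} = (1 − (1−μ)(1−β))m̄^t + (1−μ)ḡ^t, and x̂^{t+1} = x̂^t − (η/(1−β))ḡ^t. Then the error sequence e^t := x̂^t − x̄^t satisfies e^0 = 0 and, for every t ≥ 0, e^{t+1} = (1 − (1−μ)(1−β))e^t − (ηβ/(1−β))ḡ^t; equivalently, e^{t+1} = −ηβ ∑_{k=0}^{t} ((1/(1−β))ḡ^k − m̄^k). -/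
open Finset

noncomputable section

/-- **Closed-form error recursion.**  For the node-averaged QG-DSGDm iterates
`x̄^{t+1} = x̄^t − η(βm̄^t + ḡ^t)`, `m̄^{t+1} = (1 − (1−μ)(1−β))m̄^t + (1−μ)ḡ^t`
with `m̄^0 = 0`, and the virtual SGD sequence `x̂^{t+1} = x̂^t − (η/(1−β))ḡ^t`
with `x̂^0 = x̄^0`, the error `e^t := x̂^t − x̄^t` satisfies `e^0 = 0`,
`e^{t+1} = (1 − (1−μ)(1−β))e^t − (ηβ/(1−β))ḡ^t`, and equivalently
`e^{t+1} = −ηβ ∑_{k=0}^{t} ((1/(1−β))ḡ^k − m̄^k)`. -/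
theorem closed_form_error_recursion (d : ℕ) (η β μ : ℝ)
    (hη : 0 < η) (hβ0 : 0 ≤ β) (hβ1 : β < 1) (hμ0 : 0 ≤ μ) (hμ1 : μ < 1)
    (g xbar mbar xhat : ℕ → EuclideanSpace ℝ (Fin d))
    (hm0 : mbar 0 = 0) (hx0 : xhat 0 = xbar 0)
    (hxbar : ∀ t, xbar (t + 1) = xbar t - η • (β • mbar t + g t))
    (hmbar : ∀ t, mbar (t + 1) = (1 - (1 - μ) * (1 - β)) • mbar t + (1 - μ) • g t)
    (hxhat : ∀ t, xhat (t + 1) = xhat t - (η / (1 - β)) • g t) :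
    xhat 0 - xbar 0 = 0 ∧
    (∀ t, xhat (t + 1) - xbar (t + 1)
        = (1 - (1 - μ) * (1 - β)) • (xhat t - xbar t) - (η * β / (1 - β)) • g t) ∧
    (∀ t, xhat (t + 1) - xbar (t + 1)
        = (-(η * β)) • ∑ k ∈ Finset.range (t + 1), ((1 / (1 - β)) • g k - mbar k)) := by
  have hb : (1 : ℝ) - β ≠ 0 := by linarith
  have hmu : (1 : ℝ) - μ ≠ 0 := by linarith
  have hrec : ∀ t, xhat (t + 1) - xbar (t + 1)
      = (xhat t - xbar t) - (η * β) • ((1 / (1 - β)) • g t - mbar t) := by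
    intro t
    rw [hxhat, hxbar]
    match_scalars <;> field_simp <;> ring
  have key : ∀ t, xhat t - xbar t = (-(η * β) / ((1 - μ) * (1 - β))) • mbar t := by
    intro t
    induction t with
    | zero => simp [hx0, hm0]
    | succ t ih =>
      rw [hrec, ih, hmbar]
      match_scalars <;> field_simp <;> ring
  refine ⟨by simp [hx0], ?_, ?_⟩
  · intro t
    rw [hrec, key t]
    match_scalars <;> field_simp <;> ring
  · intro t
    induction t with
    | zero => rw [hrec]; simp [hx0]
    | succ t ih =>
      rw [Finset.sum_range_succ, hrec, ih, smul_add]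
      module

end
end

section
/- (Single-worker QG-DSGDm recovers Quasi-Hyperbolic Momentum.) Let η > 0, β ∈ [0,1), μ ∈ [0,1) with β̂ := μ + (1−μ)β > 0, and let (g^t)_{t≥1} be any sequence in ℝ^d. Define sequences (x^t), (m^t) by m^0 = 0 and, for t ≥ 1, x^{t+1'} given by x^{t+1} = x^t − η(βm^{t−1} + g^t) and m^t = μm^{t−1} + (1−μ)(x^t − x^{t+1})/η. Then the rescaled momentum m̂^t := m^t/(1−μ) satisfies, for all t ≥ 1, m̂^t = β̂ m̂^{t−1} + g^t and x^{t+1} = x^t − η((1 − μ/β̂)m̂^t + (μ/β̂)g^t). -/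
/-!
Substituting the position step into the momentum update gives
`m^t = β̂ m^{t-1} + (1-μ) g^t`, i.e. the rescaled recursion. The QHM direction then collapses:
`(1 - μ/β̂) m̂^t + (μ/β̂) g^t = (β̂ - μ) m̂^{t-1} + g^t = β m^{t-1} + g^t`, since `β̂ - μ = (1-μ)β`,
which is exactly the QG-DSGDm step.
-/

section

variable {K E : Type*} [Field K] [AddCommGroup E] [Module K E]

theorem momentum_eq_of_step {η β μ : K} (hη : η ≠ 0) (x g m : E) :
    μ • m + ((1 - μ) / η) • (x - (x - η • (β • m + g)))
      = (μ + (1 - μ) * β) • m + (1 - μ) • g := by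
  rw [sub_sub_cancel, smul_smul, div_mul_cancel₀ _ hη]
  module

theorem inv_smul_eq_of_eq_add_smul {μ b : K} (hμ : μ ≠ 1) {m m' g : E}
    (h : m = b • m' + (1 - μ) • g) :
    (1 - μ)⁻¹ • m = b • ((1 - μ)⁻¹ • m') + g := by
  have hμ' : 1 - μ ≠ 0 := sub_ne_zero.mpr hμ.symm
  rw [h, smul_add, smul_comm, inv_smul_smul₀ hμ']

theorem sub_div_smul_add_div_smul {b μ : K} (hb : b ≠ 0) (v g : E) :
    (1 - μ / b) • (b • v + g) + (μ / b) • g = (b - μ) • v + g := by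
  match_scalars <;> field_simp
  ring

end

theorem single_worker_qg_dsgdm_is_qhm_general (d : ℕ) (η β μ : ℝ)
    (hη : 0 < η) (hμ1 : μ < 1)
    (hbhat : 0 < μ + (1 - μ) * β)
    (g x m : ℕ → EuclideanSpace ℝ (Fin d))
    (hx : ∀ t, 1 ≤ t → x (t + 1) = x t - η • (β • m (t - 1) + g t))
    (hm : ∀ t, 1 ≤ t → m t = μ • m (t - 1) + ((1 - μ) / η) • (x t - x (t + 1))) :
    ∀ t, 1 ≤ t →
      (1 - μ)⁻¹ • m t
        = (μ + (1 - μ) * β) • ((1 - μ)⁻¹ • m (t - 1)) + g t ∧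
      x (t + 1) = x t - η • ((1 - μ / (μ + (1 - μ) * β)) • ((1 - μ)⁻¹ • m t)
        + (μ / (μ + (1 - μ) * β)) • g t) := by
  intro t ht
  have hmomentum : m t = (μ + (1 - μ) * β) • m (t - 1) + (1 - μ) • g t := by
    rw [hm t ht, hx t ht, momentum_eq_of_step hη.ne']
  have hrescaled := inv_smul_eq_of_eq_add_smul hμ1.ne hmomentum
  refine ⟨hrescaled, ?_⟩
  rw [hrescaled, sub_div_smul_add_div_smul hbhat.ne', hx t ht, smul_smul]
  congr 4
  field_simp [sub_ne_zero.mpr hμ1.ne']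
  ring

/-- **Single-worker QG-DSGDm recovers Quasi-Hyperbolic Momentum.**
With `m^0 = 0` and, for `t ≥ 1`,
`x^{t+1} = x^t − η(βm^{t−1} + g^t)`, `m^t = μm^{t−1} + (1−μ)(x^t − x^{t+1})/η`,
the rescaled momentum `m̂^t := m^t/(1−μ)` satisfies, for all `t ≥ 1`,
`m̂^t = β̂ m̂^{t−1} + g^t` and
`x^{t+1} = x^t − η((1 − μ/β̂)m̂^t + (μ/β̂)g^t)` where `β̂ := μ + (1−μ)β`. -/
theorem single_worker_qg_dsgdm_is_qhm (d : ℕ) (η β μ : ℝ)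
    (hη : 0 < η) (hβ0 : 0 ≤ β) (hβ1 : β < 1) (hμ0 : 0 ≤ μ) (hμ1 : μ < 1)
    (hbhat : 0 < μ + (1 - μ) * β)
    (g x m : ℕ → EuclideanSpace ℝ (Fin d))
    (hm0 : m 0 = 0)
    (hx : ∀ t, 1 ≤ t → x (t + 1) = x t - η • (β • m (t - 1) + g t))
    (hm : ∀ t, 1 ≤ t → m t = μ • m (t - 1) + ((1 - μ) / η) • (x t - x (t + 1))) :
    ∀ t, 1 ≤ t →
      (1 - μ)⁻¹ • m t
        = (μ + (1 - μ) * β) • ((1 - μ)⁻¹ • m (t - 1)) + g t ∧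
      x (t + 1) = x t - η • ((1 - μ / (μ + (1 - μ) * β)) • ((1 - μ)⁻¹ • m t)
        + (μ / (μ + (1 - μ) * β)) • g t) :=
  single_worker_qg_dsgdm_is_qhm_general d η β μ hη hμ1 hbhat g x m hx hm
end

section
/- (Single-worker QG-DSGDm-N simplification.) Let f : ℝ^d → ℝ be differentiable, η > 0, β, μ ∈ [0,1) with β̂ := μ + (1−μ)β > 0. Define sequences (x^t), (m^t) by m^0 = 0 and, for t ≥ 1: h^t := βm^{t−1} + ∇f(x^t + βm^{t−1}), x^{t+1} = x^t − ηh^t, and m^t = μm^{t−1} + (1−μ)(x^t − x^{t+1})/η. Then the rescaled momentum m̂^t := m^t/(1−μ) satisfies, for all t ≥ 1, with the look-ahead point z^t := x^t + β(1−μ)m̂^{t−1}: m̂^t = β̂ m̂^{t−1} + ∇f(z^t) and x^{t+1} = x^t − η((1 − μ/β̂)m̂^t + (μ/β̂)∇f(z^t)). -/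
/-!
The step gives `x^t - x^{t+1} = η h^t`, so `η` cancels from the buffer update and
`m^t = β̂ m^{t-1} + (1 - μ) ∇f(z^t)`; dividing by `1 - μ` is the first identity. For the second,
substituting `m̂^t = β̂ m̂^{t-1} + ∇f(z^t)` into `(1 - μ/β̂) m̂^t + (μ/β̂) ∇f(z^t)` returns
`(β̂ - μ) m̂^{t-1} + ∇f(z^t) = h^t`, since `β̂ - μ = (1 - μ) β`.
-/

noncomputable section

section MomentumAlgebra

variable {K V : Type*} [Field K] [AddCommGroup V] [Module K V]

theorem momentum_update_eq_of_step {η β μ : K} (hη : η ≠ 0) {x x' m₀ m g : V}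
    (hx : x' = x - η • (β • m₀ + g)) (hm : m = μ • m₀ + ((1 - μ) / η) • (x - x')) :
    m = (μ + (1 - μ) * β) • m₀ + (1 - μ) • g := by
  rw [hm, hx, sub_sub_cancel, smul_smul, div_mul_cancel₀ _ hη, smul_add, smul_smul, add_smul,
    ← add_assoc]

theorem rescaled_momentum_eq_of_step {η β μ : K} (hη : η ≠ 0) (hμ : 1 - μ ≠ 0)
    {x x' m₀ m g : V}
    (hx : x' = x - η • (β • m₀ + g)) (hm : m = μ • m₀ + ((1 - μ) / η) • (x - x')) :
    (1 - μ)⁻¹ • m = (μ + (1 - μ) * β) • ((1 - μ)⁻¹ • m₀) + g := by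
  rw [momentum_update_eq_of_step hη hx hm, smul_add, smul_comm, inv_smul_smul₀ hμ]

theorem smul_inv_smul_mul_cancel {β μ : K} (hμ : 1 - μ ≠ 0) (v : V) :
    (β * (1 - μ)) • ((1 - μ)⁻¹ • v) = β • v := by
  rw [smul_smul, mul_assoc, mul_inv_cancel₀ hμ, mul_one]

theorem interpolated_direction_eq {b μ : K} (hb : b ≠ 0) {mhat₀ mhat g : V}
    (hmhat : mhat = b • mhat₀ + g) :
    (1 - μ / b) • mhat + (μ / b) • g = (b - μ) • mhat₀ + g := by
  rw [hmhat]
  match_scalars <;> field_simp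
  ring

end MomentumAlgebra

theorem single_worker_qg_dsgdmn_simplification_general (d : ℕ)
    (f : EuclideanSpace ℝ (Fin d) → ℝ)
    (η β μ : ℝ) (hη : 0 < η)
    (hμ1 : μ < 1) (hbhat : 0 < μ + (1 - μ) * β)
    (x m : ℕ → EuclideanSpace ℝ (Fin d))
    (hx : ∀ t, 1 ≤ t →
      x (t + 1) = x t - η • (β • m (t - 1) + gradient f (x t + β • m (t - 1))))
    (hm : ∀ t, 1 ≤ t → m t = μ • m (t - 1) + ((1 - μ) / η) • (x t - x (t + 1))) :
    ∀ t, 1 ≤ t →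
      (1 - μ)⁻¹ • m t
        = (μ + (1 - μ) * β) • ((1 - μ)⁻¹ • m (t - 1))
          + gradient f (x t + (β * (1 - μ)) • ((1 - μ)⁻¹ • m (t - 1))) ∧
      x (t + 1) = x t - η • ((1 - μ / (μ + (1 - μ) * β)) • ((1 - μ)⁻¹ • m t)
        + (μ / (μ + (1 - μ) * β)) •
            gradient f (x t + (β * (1 - μ)) • ((1 - μ)⁻¹ • m (t - 1)))) := by
  intro t ht
  have hμ : 1 - μ ≠ 0 := sub_ne_zero.mpr hμ1.ne'
  rw [smul_inv_smul_mul_cancel hμ]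
  have hmhat := rescaled_momentum_eq_of_step hη.ne' hμ (hx t ht) (hm t ht)
  refine ⟨hmhat, ?_⟩
  rw [interpolated_direction_eq hbhat.ne' hmhat, add_sub_cancel_left, mul_comm (1 - μ) β,
    smul_inv_smul_mul_cancel hμ]
  exact hx t ht

/-- **Single-worker QG-DSGDm-N simplification.**
With `m^0 = 0` and, for `t ≥ 1`, the Nesterov-style update
`x^{t+1} = x^t − η(βm^{t−1} + ∇f(x^t + βm^{t−1}))`,
`m^t = μm^{t−1} + (1−μ)(x^t − x^{t+1})/η`, the rescaled momentum
`m̂^t := m^t/(1−μ)` satisfies, with `β̂ := μ + (1−μ)β` and look-ahead point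
`z^t := x^t + β(1−μ)m̂^{t−1}`: `m̂^t = β̂m̂^{t−1} + ∇f(z^t)` and
`x^{t+1} = x^t − η((1 − μ/β̂)m̂^t + (μ/β̂)∇f(z^t))`. -/
theorem single_worker_qg_dsgdmn_simplification (d : ℕ)
    (f : EuclideanSpace ℝ (Fin d) → ℝ) (hf : Differentiable ℝ f)
    (η β μ : ℝ) (hη : 0 < η) (hβ0 : 0 ≤ β) (hβ1 : β < 1)
    (hμ0 : 0 ≤ μ) (hμ1 : μ < 1) (hbhat : 0 < μ + (1 - μ) * β)
    (x m : ℕ → EuclideanSpace ℝ (Fin d))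
    (hm0 : m 0 = 0)
    (hx : ∀ t, 1 ≤ t →
      x (t + 1) = x t - η • (β • m (t - 1) + gradient f (x t + β • m (t - 1))))
    (hm : ∀ t, 1 ≤ t → m t = μ • m (t - 1) + ((1 - μ) / η) • (x t - x (t + 1))) :
    ∀ t, 1 ≤ t →
      (1 - μ)⁻¹ • m t
        = (μ + (1 - μ) * β) • ((1 - μ)⁻¹ • m (t - 1))
          + gradient f (x t + (β * (1 - μ)) • ((1 - μ)⁻¹ • m (t - 1))) ∧
      x (t + 1) = x t - η • ((1 - μ / (μ + (1 - μ) * β)) • ((1 - μ)⁻¹ • m t)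
        + (μ / (μ + (1 - μ) * β)) •
            gradient f (x t + (β * (1 - μ)) • ((1 - μ)⁻¹ • m (t - 1)))) :=
  single_worker_qg_dsgdmn_simplification_general d f η β μ hη hμ1 hbhat x m hx hm

end
end

section
/- (Combined inner-product lower bound under strong convexity.) Let each f_i : ℝ^d → ℝ be L-smooth and c-strongly convex with 0 < c ≤ L, let f := (1/n)∑_{i=1}^n f_i, and let x* be a minimizer of f. Then for any x_1,…,x_n ∈ ℝ^d with x̄ := (1/n)∑_i x_i and any x̂ ∈ ℝ^d: (1/n)∑_{i=1}^n ⟨∇f_i(x_i), x̂ − x*⟩ ≥ (1/2)(f(x̄) − f(x*)) + (c/4)‖x̂ − x*‖² − (2L/n)∑_{i=1}^n ‖x_i − x̄‖² − 4L‖x̂ − x̄‖². -/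
/-!
Smoothness enters only through `⟪g u - g v, u - v⟫ ≤ L‖u - v‖²`; combined with convexity this gives
the descent inequality `f v ≤ f u + ⟪g u, v - u⟫ + L‖v - u‖²` with no integration of the gradient,
and, by one descent step from `u`, the bound `‖g u‖² ≤ 4L (f u - min f)`. For `F = ∑ᵢ fᵢ`, which is
convex and `nL`-smooth, these two give `F x̄ - F x* ≤ 2 (F x̂ - F x*) + 2nL‖x̄ - x̂‖²`.

For each `i`, strong convexity of `fᵢ` from `xᵢ` to `x*` and from `x̂` to `xᵢ`, plus smoothness for
the cross term `⟪∇fᵢ xᵢ - ∇fᵢ x̂, x̂ - xᵢ⟫`, bound `⟪∇fᵢ xᵢ, x̂ - x*⟫` below by `fᵢ x̂ - fᵢ x*` and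
quadratic terms, which `‖a - c‖² ≤ 2 (‖a - b‖² + ‖b - c‖²)` puts in the form of the statement.
Averaging over `i` and inserting the bound on `F x̄` finishes the proof.
-/

open Finset
open scoped RealInnerProductSpace

section

variable {E : Type*} [SeminormedAddCommGroup E]

theorem norm_sub_sq_le_two_mul (a b c : E) : ‖a - c‖ ^ 2 ≤ 2 * (‖a - b‖ ^ 2 + ‖b - c‖ ^ 2) := by
  rw [← sub_add_sub_cancel a b c]
  exact (pow_le_pow_left₀ (norm_nonneg _) (norm_add_le _ _) 2).trans add_sq_le

theorem norm_sum_sub_sum_le {ι : Type*} {g : ι → E → E} {L : ℝ} (s : Finset ι)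
    (hlip : ∀ i u v, ‖g i u - g i v‖ ≤ L * ‖u - v‖) (u v : E) :
    ‖∑ i ∈ s, g i u - ∑ i ∈ s, g i v‖ ≤ #s * L * ‖u - v‖ := by
  rw [← sum_sub_distrib, mul_assoc, ← nsmul_eq_mul, ← sum_const]
  exact (norm_sum_le _ _).trans (sum_le_sum fun i _ => hlip i u v)

end

section FirstOrder

variable {E : Type*} [NormedAddCommGroup E] [InnerProductSpace ℝ E] {f : E → ℝ} {g : E → E}
  {L c : ℝ}

theorem inner_sub_le_of_lipschitz (hlip : ∀ u v, ‖g u - g v‖ ≤ L * ‖u - v‖) (u v : E) :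
    ⟪g u - g v, u - v⟫ ≤ L * ‖u - v‖ ^ 2 :=
  calc ⟪g u - g v, u - v⟫ ≤ ‖g u - g v‖ * ‖u - v‖ := real_inner_le_norm _ _
    _ ≤ L * ‖u - v‖ * ‖u - v‖ := by gcongr; exact hlip u v
    _ = L * ‖u - v‖ ^ 2 := by ring

theorem le_add_inner_add_mul_norm_sq (hconv : ∀ u v, f u + ⟪g u, v - u⟫ ≤ f v)
    (hlip : ∀ u v, ‖g u - g v‖ ≤ L * ‖u - v‖) (u v : E) :
    f v ≤ f u + ⟪g u, v - u⟫ + L * ‖v - u‖ ^ 2 := by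
  have hvu := hconv v u
  have hcross := inner_sub_le_of_lipschitz hlip v u
  rw [← neg_sub v u, inner_neg_right] at hvu
  rw [inner_sub_left] at hcross
  linarith

theorem norm_sq_le_four_mul_sub_of_forall_le (hconv : ∀ u v, f u + ⟪g u, v - u⟫ ≤ f v)
    (hlip : ∀ u v, ‖g u - g v‖ ≤ L * ‖u - v‖) (hL : 0 < L) {z : E} (hmin : ∀ y, f z ≤ f y)
    (u : E) : ‖g u‖ ^ 2 ≤ 4 * L * (f u - f z) := by
  have hstep := le_add_inner_add_mul_norm_sq hconv hlip u (u - (2 * L)⁻¹ • g u)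
  rw [sub_sub_cancel_left, inner_neg_right, norm_neg, real_inner_smul_right,
    real_inner_self_eq_norm_sq, norm_smul, Real.norm_of_nonneg (by positivity)] at hstep
  have hdecrease :
      (2 * L)⁻¹ * ‖g u‖ ^ 2 - L * ((2 * L)⁻¹ * ‖g u‖) ^ 2 = ‖g u‖ ^ 2 / (4 * L) := by
    field_simp; ring
  have : ‖g u‖ ^ 2 / (4 * L) ≤ f u - f z := by linarith [hmin (u - (2 * L)⁻¹ • g u)]
  rwa [div_le_iff₀ (by positivity), mul_comm] at this

theorem sub_le_two_mul_sub_add (hconv : ∀ u v, f u + ⟪g u, v - u⟫ ≤ f v)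
    (hlip : ∀ u v, ‖g u - g v‖ ≤ L * ‖u - v‖) (hL : 0 < L) {z : E} (hmin : ∀ y, f z ≤ f y)
    (u v : E) : f v - f z ≤ 2 * (f u - f z) + 2 * L * ‖v - u‖ ^ 2 := by
  have hdescent := le_add_inner_add_mul_norm_sq hconv hlip u v
  have hgrad := norm_sq_le_four_mul_sub_of_forall_le hconv hlip hL hmin u
  have hinner : ⟪g u, v - u⟫ ≤ f u - f z + L * ‖v - u‖ ^ 2 := by
    refine le_of_mul_le_mul_left ?_ (by positivity : 0 < 4 * L)
    nlinarith [real_inner_le_norm (g u) (v - u), sq_nonneg (‖g u‖ - 2 * L * ‖v - u‖)]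
  linarith

theorem add_mul_norm_sq_le_inner
    (hsc : ∀ u v, f u + ⟪g u, v - u⟫ + c / 2 * ‖v - u‖ ^ 2 ≤ f v)
    (hlip : ∀ u v, ‖g u - g v‖ ≤ L * ‖u - v‖) (y u z : E) :
    f u - f z + c / 2 * ‖y - z‖ ^ 2 + (c / 2 - L) * ‖u - y‖ ^ 2 ≤ ⟪g y, u - z⟫ := by
  have hyz := hsc y z
  have huy := hsc u y
  have hcross := inner_sub_le_of_lipschitz hlip u y
  rw [norm_sub_rev z y] at hyz
  rw [norm_sub_rev y u] at huy
  simp only [inner_sub_left, inner_sub_right] at hyz huy hcross ⊢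
  linarith

theorem sub_mul_norm_sq_le_inner
    (hsc : ∀ u v, f u + ⟪g u, v - u⟫ + c / 2 * ‖v - u‖ ^ 2 ≤ f v)
    (hlip : ∀ u v, ‖g u - g v‖ ≤ L * ‖u - v‖) (hc : 0 ≤ c) (hL : 0 ≤ L) (y u z w : E) :
    f u - f z + c / 4 * ‖u - z‖ ^ 2 - 2 * L * ‖u - w‖ ^ 2 - 2 * L * ‖y - w‖ ^ 2
      ≤ ⟪g y, u - z⟫ := by
  have hthree := add_mul_norm_sq_le_inner hsc hlip y u z
  have hz := norm_sub_sq_le_two_mul u y z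
  have hw := norm_sub_sq_le_two_mul u w y
  rw [norm_sub_rev w y] at hw
  linear_combination hthree + c / 4 * hz + L * hw

end FirstOrder

theorem sum_add_inner_sum_le {ι E : Type*} [NormedAddCommGroup E] [InnerProductSpace ℝ E]
    {f : ι → E → ℝ} {g : ι → E → E} (s : Finset ι)
    (hconv : ∀ i u v, f i u + ⟪g i u, v - u⟫ ≤ f i v)
    (u v : E) : ∑ i ∈ s, f i u + ⟪∑ i ∈ s, g i u, v - u⟫ ≤ ∑ i ∈ s, f i v := by
  rw [sum_inner, ← sum_add_distrib]
  exact sum_le_sum fun i _ => hconv i u v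

theorem combined_inner_product_lower_bound_general (d n : ℕ) (hn : 0 < n)
    (L c : ℝ) (hc : 0 < c) (hcL : c ≤ L)
    (f : Fin n → EuclideanSpace ℝ (Fin d) → ℝ)
    (hsmooth : ∀ i u v, ‖gradient (f i) u - gradient (f i) v‖ ≤ L * ‖u - v‖)
    (hsc : ∀ i u v, f i u + ⟪gradient (f i) u, v - u⟫ + (c / 2) * ‖v - u‖ ^ 2 ≤ f i v)
    (xstar : EuclideanSpace ℝ (Fin d))
    (hxstar : ∀ y, (n : ℝ)⁻¹ * ∑ i, f i xstar ≤ (n : ℝ)⁻¹ * ∑ i, f i y)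
    (x : Fin n → EuclideanSpace ℝ (Fin d))
    (xbar xhat : EuclideanSpace ℝ (Fin d)) :
    (n : ℝ)⁻¹ * ∑ i, ⟪gradient (f i) (x i), xhat - xstar⟫
      ≥ (1 / 2) * ((n : ℝ)⁻¹ * ∑ i, f i xbar - (n : ℝ)⁻¹ * ∑ i, f i xstar)
        + (c / 4) * ‖xhat - xstar‖ ^ 2
        - (2 * L / n) * ∑ i, ‖x i - xbar‖ ^ 2
        - 4 * L * ‖xhat - xbar‖ ^ 2 := by
  have hL : 0 < L := hc.trans_le hcL
  have hconv : ∀ i u v, f i u + ⟪gradient (f i) u, v - u⟫ ≤ f i v := fun i u v =>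
    (le_add_of_nonneg_right (by positivity)).trans (hsc i u v)
  have hmin : ∀ y, ∑ i, f i xstar ≤ ∑ i, f i y := fun y =>
    le_of_mul_le_mul_left (hxstar y) (by positivity)
  have hgap := sub_le_two_mul_sub_add (f := fun u => ∑ i, f i u)
    (sum_add_inner_sum_le univ hconv) (norm_sum_sub_sum_le univ hsmooth) (by simp [hn, hL])
    hmin xhat xbar
  have hagents : ∑ i, (f i xhat - f i xstar + c / 4 * ‖xhat - xstar‖ ^ 2
      - 2 * L * ‖xhat - xbar‖ ^ 2 - 2 * L * ‖x i - xbar‖ ^ 2)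
      ≤ ∑ i, ⟪gradient (f i) (x i), xhat - xstar⟫ := sum_le_sum fun i _ =>
    sub_mul_norm_sq_le_inner (hsc i) (hsmooth i) hc.le hL.le (x i) xhat xstar xbar
  simp only [sum_sub_distrib, sum_add_distrib, sum_const, card_univ, Fintype.card_fin,
    nsmul_eq_mul, ← mul_sum] at hagents hgap
  rw [norm_sub_rev xbar xhat] at hgap
  have hn' : (n : ℝ)⁻¹ * n = 1 := inv_mul_cancel₀ (by positivity)
  -- the argument yields the bound with `3 * L` in place of `4 * L`
  have hslack : 0 ≤ L * ‖xhat - xbar‖ ^ 2 := by positivity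
  linear_combination (n : ℝ)⁻¹ * hagents + (n : ℝ)⁻¹ / 2 * hgap + hslack
    - (c / 4 * ‖xhat - xstar‖ ^ 2 - 3 * L * ‖xhat - xbar‖ ^ 2) * hn'

/-- **Combined inner-product lower bound under strong convexity.**
If each `f_i` is `L`-smooth and `c`-strongly convex with `0 < c ≤ L`, and `x*`
minimizes `f := (1/n)∑ᵢ f_i`, then for any points `x₁,…,x_n` with average `x̄`
and any `x̂`:
`(1/n)∑ᵢ ⟪∇f_i(x_i), x̂ − x*⟫ ≥ (1/2)(f(x̄) − f(x*)) + (c/4)‖x̂ − x*‖²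
  − (2L/n)∑ᵢ ‖x_i − x̄‖² − 4L‖x̂ − x̄‖²`. -/
theorem combined_inner_product_lower_bound (d n : ℕ) (hn : 0 < n)
    (L c : ℝ) (hc : 0 < c) (hcL : c ≤ L)
    (f : Fin n → EuclideanSpace ℝ (Fin d) → ℝ)
    (hdiff : ∀ i, Differentiable ℝ (f i))
    (hsmooth : ∀ i u v, ‖gradient (f i) u - gradient (f i) v‖ ≤ L * ‖u - v‖)
    (hsc : ∀ i u v, f i u + ⟪gradient (f i) u, v - u⟫ + (c / 2) * ‖v - u‖ ^ 2 ≤ f i v)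
    (xstar : EuclideanSpace ℝ (Fin d))
    (hxstar : ∀ y, (n : ℝ)⁻¹ * ∑ i, f i xstar ≤ (n : ℝ)⁻¹ * ∑ i, f i y)
    (x : Fin n → EuclideanSpace ℝ (Fin d))
    (xbar xhat : EuclideanSpace ℝ (Fin d))
    (hxbar : xbar = (n : ℝ)⁻¹ • ∑ i, x i) :
    (n : ℝ)⁻¹ * ∑ i, ⟪gradient (f i) (x i), xhat - xstar⟫
      ≥ (1 / 2) * ((n : ℝ)⁻¹ * ∑ i, f i xbar - (n : ℝ)⁻¹ * ∑ i, f i xstar)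
        + (c / 4) * ‖xhat - xstar‖ ^ 2
        - (2 * L / n) * ∑ i, ‖x i - xbar‖ ^ 2
        - 4 * L * ‖xhat - xbar‖ ^ 2 :=
  combined_inner_product_lower_bound_general d n hn L c hc hcL f hsmooth hsc xstar hxstar x xbar
    xhat
end

section
/- (Strong-convexity inner-product bound at the off-average point.) Let each f_i : ℝ^d → ℝ be c-strongly convex with 0 < c ≤ L, let f := (1/n)∑_{i=1}^n f_i, and let x* ∈ ℝ^d be arbitrary. Then for any x_1,…,x_n ∈ ℝ^d with x̄ := (1/n)∑_i x_i and any x̂ ∈ ℝ^d: (1/n)∑_{i=1}^n ⟨∇f_i(x_i), x_i − x*⟩ ≥ (1/n)∑_{i=1}^n f_i(x_i) − f(x*) + (c/4)‖x̂ − x*‖² − (L/n)∑_{i=1}^n ‖x_i − x̄‖² − L‖x̂ − x̄‖². -/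
open Finset
open scoped RealInnerProductSpace

noncomputable section

/-- **Strong-convexity inner-product bound at the off-average point.**
If each `f_i` is `c`-strongly convex with `0 < c ≤ L`, then for any points
`x₁,…,x_n` with average `x̄`, any `x̂`, and arbitrary `x*`:
`(1/n)∑ᵢ ⟪∇f_i(x_i), x_i − x*⟫ ≥ (1/n)∑ᵢ f_i(x_i) − f(x*) + (c/4)‖x̂ − x*‖²
  − (L/n)∑ᵢ ‖x_i − x̄‖² − L‖x̂ − x̄‖²`. -/
theorem strong_convexity_inner_product_bound (d n : ℕ) (hn : 0 < n)
    (L c : ℝ) (hc : 0 < c) (hcL : c ≤ L)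
    (f : Fin n → EuclideanSpace ℝ (Fin d) → ℝ)
    (hdiff : ∀ i, Differentiable ℝ (f i))
    (hsc : ∀ i u v, f i u + ⟪gradient (f i) u, v - u⟫ + (c / 2) * ‖v - u‖ ^ 2 ≤ f i v)
    (xstar : EuclideanSpace ℝ (Fin d))
    (x : Fin n → EuclideanSpace ℝ (Fin d))
    (xbar xhat : EuclideanSpace ℝ (Fin d))
    (hxbar : xbar = (n : ℝ)⁻¹ • ∑ i, x i) :
    (n : ℝ)⁻¹ * ∑ i, ⟪gradient (f i) (x i), x i - xstar⟫
      ≥ (n : ℝ)⁻¹ * ∑ i, f i (x i) - (n : ℝ)⁻¹ * ∑ i, f i xstar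
        + (c / 4) * ‖xhat - xstar‖ ^ 2
        - (L / n) * ∑ i, ‖x i - xbar‖ ^ 2
        - L * ‖xhat - xbar‖ ^ 2 := by
  have hn' : (0:ℝ) < n := by exact_mod_cast hn
  -- step 1: pointwise strong convexity bound
  have ha : ∀ i, f i (x i) - f i xstar + (c/2) * ‖x i - xstar‖^2
      ≤ ⟪gradient (f i) (x i), x i - xstar⟫ := by
    intro i
    have h := hsc i (x i) xstar
    have h1 : ⟪gradient (f i) (x i), xstar - x i⟫
        = -⟪gradient (f i) (x i), x i - xstar⟫ := by
      rw [← inner_neg_right]; congr 1; abel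
    have h2 : ‖xstar - x i‖ = ‖x i - xstar‖ := norm_sub_rev _ _
    rw [h1, h2] at h; linarith
  have hsum : ∑ i, (f i (x i) - f i xstar + (c/2) * ‖x i - xstar‖^2)
      ≤ ∑ i, ⟪gradient (f i) (x i), x i - xstar⟫ :=
    Finset.sum_le_sum fun i _ => ha i
  -- step 2: Jensen
  have hxb : xbar - xstar = (n:ℝ)⁻¹ • ∑ i, (x i - xstar) := by
    rw [Finset.sum_sub_distrib, smul_sub, Finset.sum_const, card_univ, Fintype.card_fin,
      hxbar]
    congr 1
    rw [← Nat.cast_smul_eq_nsmul ℝ, smul_smul, inv_mul_cancel₀ (ne_of_gt hn'), one_smul]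
  have hnormle : ‖xbar - xstar‖ ≤ (n:ℝ)⁻¹ * ∑ i, ‖x i - xstar‖ := by
    rw [hxb, norm_smul, Real.norm_eq_abs, abs_of_pos (by positivity)]
    exact mul_le_mul_of_nonneg_left (norm_sum_le _ _) (by positivity)
  have hcs : (∑ i, ‖x i - xstar‖)^2 ≤ (n:ℝ) * ∑ i, ‖x i - xstar‖^2 := by
    have := sq_sum_le_card_mul_sum_sq (s := (univ : Finset (Fin n)))
      (f := fun i => ‖x i - xstar‖)
    simpa [card_univ] using this
  have hJ : ‖xbar - xstar‖^2 ≤ (n:ℝ)⁻¹ * ∑ i, ‖x i - xstar‖^2 := by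
    have h1 : ‖xbar - xstar‖^2 ≤ ((n:ℝ)⁻¹ * ∑ i, ‖x i - xstar‖)^2 :=
      pow_le_pow_left₀ (norm_nonneg _) hnormle 2
    have h2 : ((n:ℝ)⁻¹ * ∑ i, ‖x i - xstar‖)^2
        = (n:ℝ)⁻¹ * ((n:ℝ)⁻¹ * (∑ i, ‖x i - xstar‖)^2) := by ring
    nlinarith [mul_le_mul_of_nonneg_left hcs (le_of_lt (by positivity : (0:ℝ) < (n:ℝ)⁻¹ * (n:ℝ)⁻¹)),
      inv_mul_cancel₀ (ne_of_gt hn')]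
  -- step 3: triangle-type bound
  have hT : ‖xhat - xstar‖^2 ≤ 2*‖xhat - xbar‖^2 + 2*‖xbar - xstar‖^2 := by
    have h1 : ‖xhat - xstar‖ ≤ ‖xhat - xbar‖ + ‖xbar - xstar‖ := norm_sub_le_norm_sub_add_norm_sub _ _ _
    have h2 := mul_self_le_mul_self (norm_nonneg (xhat - xstar)) h1
    nlinarith [sq_nonneg (‖xhat - xbar‖ - ‖xbar - xstar‖), norm_nonneg (xhat - xbar), norm_nonneg (xbar - xstar)]
  -- combine
  rw [ge_iff_le]
  have hsum' : (n:ℝ)⁻¹ * ∑ i, (f i (x i) - f i xstar + (c/2) * ‖x i - xstar‖^2)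
      ≤ (n:ℝ)⁻¹ * ∑ i, ⟪gradient (f i) (x i), x i - xstar⟫ :=
    mul_le_mul_of_nonneg_left hsum (by positivity)
  rw [Finset.sum_add_distrib, Finset.sum_sub_distrib, ← Finset.mul_sum] at hsum'
  have hL2 : (0:ℝ) ≤ (L / n) * ∑ i, ‖x i - xbar‖ ^ 2 :=
    mul_nonneg (div_nonneg (le_of_lt (lt_of_lt_of_le hc hcL)) hn'.le)
      (Finset.sum_nonneg fun i _ => sq_nonneg _)
  nlinarith [mul_le_mul_of_nonneg_left hJ (by positivity : (0:ℝ) ≤ c/2),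
    mul_le_mul_of_nonneg_left hT (by positivity : (0:ℝ) ≤ c/4),
    mul_le_mul_of_nonneg_right hcL (sq_nonneg ‖xhat - xbar‖)]

end
end

section
/- (Inner-product bound from the average to the virtual point.) Let each f_i : ℝ^d → ℝ be convex and L-smooth, let f := (1/n)∑_{i=1}^n f_i, and let x* be a minimizer of f. Then for any x_1,…,x_n ∈ ℝ^d with x̄ := (1/n)∑_i x_i and any x̂ ∈ ℝ^d: (1/n)∑_{i=1}^n ⟨∇f_i(x_i), x̂ − x̄⟩ ≥ −(L/(2n))∑_{i=1}^n ‖x_i − x̄‖² − (1/2)(f(x̄) − f(x*)) − 3L‖x̂ − x̄‖². -/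
open Finset
open scoped RealInnerProductSpace

noncomputable section

lemma fderiv_eq_toDual_gradient {d : ℕ} (g : EuclideanSpace ℝ (Fin d) → ℝ) (u : EuclideanSpace ℝ (Fin d)) :
    fderiv ℝ g u = InnerProductSpace.toDual ℝ _ (gradient g u) :=
  ((InnerProductSpace.toDual ℝ _).apply_symm_apply _).symm

lemma quad_bound {d : ℕ} {L : ℝ} (hL : 0 ≤ L) {g : EuclideanSpace ℝ (Fin d) → ℝ}
    (hdiff : Differentiable ℝ g)
    (hsm : ∀ u v, ‖gradient g u - gradient g v‖ ≤ L * ‖u - v‖)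
    (x y : EuclideanSpace ℝ (Fin d)) :
    g y ≤ g x + ⟪gradient g x, y - x⟫ + L * ‖y - x‖ ^ 2 := by
  have key : ‖g y - g x - (fderiv ℝ g x) (y - x)‖ ≤ (L * ‖y - x‖) * ‖y - x‖ := by
    apply Convex.norm_image_sub_le_of_norm_fderiv_le' (s := segment ℝ x y)
      (fun z _ => hdiff.differentiableAt) ?_ (convex_segment x y)
      (left_mem_segment ℝ x y) (right_mem_segment ℝ x y)
    intro z hz
    rw [segment_eq_image'] at hz
    obtain ⟨t, ⟨ht0, ht1⟩, rfl⟩ := hz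
    have h1 : fderiv ℝ g (x + t • (y - x)) - fderiv ℝ g x
        = InnerProductSpace.toDual ℝ _ (gradient g (x + t • (y - x)) - gradient g x) := by
      rw [fderiv_eq_toDual_gradient, fderiv_eq_toDual_gradient, map_sub]
    rw [h1, LinearIsometryEquiv.norm_map]
    calc ‖gradient g (x + t • (y - x)) - gradient g x‖
        ≤ L * ‖x + t • (y - x) - x‖ := hsm _ _
      _ = L * (t * ‖y - x‖) := by
          rw [add_sub_cancel_left, norm_smul, Real.norm_eq_abs, abs_of_nonneg ht0]
      _ ≤ L * (1 * ‖y - x‖) := by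
          apply mul_le_mul_of_nonneg_left (by nlinarith [norm_nonneg (y - x)]) hL
      _ = L * ‖y - x‖ := by ring
  have h2 : (fderiv ℝ g x) (y - x) = ⟪gradient g x, y - x⟫ := by
    rw [fderiv_eq_toDual_gradient]; exact InnerProductSpace.toDual_apply_apply
  rw [h2] at key
  have := le_abs_self (g y - g x - ⟪gradient g x, y - x⟫)
  rw [Real.norm_eq_abs] at key
  nlinarith [sq_nonneg ‖y - x‖]

set_option maxHeartbeats 1000000 in
/-- **Inner-product bound from the average to the virtual point.**
If each `f_i` is convex and `L`-smooth and `x*` minimizes `f := (1/n)∑ᵢ f_i`,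
then for any points `x₁,…,x_n` with average `x̄` and any `x̂`:
`(1/n)∑ᵢ ⟪∇f_i(x_i), x̂ − x̄⟫ ≥ −(L/(2n))∑ᵢ ‖x_i − x̄‖²
  − (1/2)(f(x̄) − f(x*)) − 3L‖x̂ − x̄‖²`. -/
theorem inner_product_bound_average_to_virtual (d n : ℕ) (hn : 0 < n)
    (L : ℝ) (hL : 0 < L)
    (f : Fin n → EuclideanSpace ℝ (Fin d) → ℝ)
    (hdiff : ∀ i, Differentiable ℝ (f i))
    (hconv : ∀ i, ConvexOn ℝ Set.univ (f i))
    (hsmooth : ∀ i u v, ‖gradient (f i) u - gradient (f i) v‖ ≤ L * ‖u - v‖)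
    (xstar : EuclideanSpace ℝ (Fin d))
    (hxstar : ∀ y, (n : ℝ)⁻¹ * ∑ i, f i xstar ≤ (n : ℝ)⁻¹ * ∑ i, f i y)
    (x : Fin n → EuclideanSpace ℝ (Fin d))
    (xbar xhat : EuclideanSpace ℝ (Fin d))
    (hxbar : xbar = (n : ℝ)⁻¹ • ∑ i, x i) :
    (n : ℝ)⁻¹ * ∑ i, ⟪gradient (f i) (x i), xhat - xbar⟫
      ≥ -(L / (2 * n)) * ∑ i, ‖x i - xbar‖ ^ 2
        - (1 / 2) * ((n : ℝ)⁻¹ * ∑ i, f i xbar - (n : ℝ)⁻¹ * ∑ i, f i xstar)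
        - 3 * L * ‖xhat - xbar‖ ^ 2 := by
  have hn' : (0:ℝ) < n := Nat.cast_pos.mpr hn
  set v : EuclideanSpace ℝ (Fin d) := xhat - xbar with hv
  set G : EuclideanSpace ℝ (Fin d) := (n : ℝ)⁻¹ • ∑ i, gradient (f i) xbar with hG
  set D : EuclideanSpace ℝ (Fin d) :=
    (n : ℝ)⁻¹ • ∑ i, (gradient (f i) (x i) - gradient (f i) xbar) with hD
  set S : ℝ := ∑ i, ‖x i - xbar‖ ^ 2 with hS
  set fbar : ℝ := (n : ℝ)⁻¹ * ∑ i, f i xbar with hfbar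
  set fstar : ℝ := (n : ℝ)⁻¹ * ∑ i, f i xstar with hfstar
  -- split the average inner product
  have hsplit : (n : ℝ)⁻¹ * ∑ i, ⟪gradient (f i) (x i), v⟫ = ⟪D, v⟫ + ⟪G, v⟫ := by
    rw [hD, hG, real_inner_smul_left, real_inner_smul_left, sum_inner, sum_inner, ← mul_add,
      ← Finset.sum_add_distrib]
    congr 1
    apply Finset.sum_congr rfl
    intro i _
    rw [inner_sub_left]; ring
  -- bound on ‖D‖²
  have hD2 : ‖D‖ ^ 2 ≤ L ^ 2 / (n : ℝ) * S := by
    have hDn : ‖D‖ ≤ (n : ℝ)⁻¹ * (L * ∑ i, ‖x i - xbar‖) := by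
      rw [hD, norm_smul, Real.norm_eq_abs, abs_of_nonneg (by positivity)]
      apply mul_le_mul_of_nonneg_left _ (by positivity)
      calc ‖∑ i, (gradient (f i) (x i) - gradient (f i) xbar)‖
          ≤ ∑ i, ‖gradient (f i) (x i) - gradient (f i) xbar‖ := norm_sum_le _ _
        _ ≤ ∑ i, L * ‖x i - xbar‖ := Finset.sum_le_sum fun i _ => hsmooth i (x i) xbar
        _ = L * ∑ i, ‖x i - xbar‖ := by rw [Finset.mul_sum]
    have hcs : (∑ i, ‖x i - xbar‖) ^ 2 ≤ (n : ℝ) * S := by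
      have := sq_sum_le_card_mul_sum_sq (s := (univ : Finset (Fin n)))
        (f := fun i => ‖x i - xbar‖)
      simpa [hS, Finset.card_univ] using this
    have h1 : ‖D‖ ^ 2 ≤ ((n : ℝ)⁻¹ * (L * ∑ i, ‖x i - xbar‖)) ^ 2 :=
      pow_le_pow_left₀ (norm_nonneg D) hDn 2
    have h2 : ((n : ℝ)⁻¹ * (L * ∑ i, ‖x i - xbar‖)) ^ 2
        = (n : ℝ)⁻¹ ^ 2 * L ^ 2 * (∑ i, ‖x i - xbar‖) ^ 2 := by ring
    have h3 : (n : ℝ)⁻¹ ^ 2 * L ^ 2 * (∑ i, ‖x i - xbar‖) ^ 2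
        ≤ (n : ℝ)⁻¹ ^ 2 * L ^ 2 * ((n : ℝ) * S) := by
      apply mul_le_mul_of_nonneg_left hcs (by positivity)
    have h4 : (n : ℝ)⁻¹ ^ 2 * L ^ 2 * ((n : ℝ) * S) = L ^ 2 / (n : ℝ) * S := by
      field_simp
    linarith
  -- bound on ‖G‖²
  have hG2 : ‖G‖ ^ 2 ≤ 4 * L * (fbar - fstar) := by
    set y : EuclideanSpace ℝ (Fin d) := xbar - (2 * L)⁻¹ • G with hy
    have hw : y - xbar = -((2 * L)⁻¹ • G) := by rw [hy]; abel
    have hquad : ∀ i ∈ (univ : Finset (Fin n)), f i y ≤ f i xbar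
        + ⟪gradient (f i) xbar, y - xbar⟫ + L * ‖y - xbar‖ ^ 2 :=
      fun i _ => quad_bound hL.le (hdiff i) (hsmooth i) xbar y
    have hsum : ∑ i, f i y ≤ ∑ i, f i xbar + ∑ i, ⟪gradient (f i) xbar, y - xbar⟫
        + (n : ℝ) * (L * ‖y - xbar‖ ^ 2) := by
      calc ∑ i, f i y ≤ ∑ i, (f i xbar + ⟪gradient (f i) xbar, y - xbar⟫
            + L * ‖y - xbar‖ ^ 2) := Finset.sum_le_sum hquad
        _ = _ := by
            rw [Finset.sum_add_distrib, Finset.sum_add_distrib, Finset.sum_const,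
              Finset.card_univ]
            simp [nsmul_eq_mul]
    have hGw : (n : ℝ)⁻¹ * ∑ i, ⟪gradient (f i) xbar, y - xbar⟫
        = -((2 * L)⁻¹ * ‖G‖ ^ 2) := by
      rw [← sum_inner, ← real_inner_smul_left, ← hG, hw, inner_neg_right,
        real_inner_smul_right, real_inner_self_eq_norm_sq]
    have hwn : ‖y - xbar‖ ^ 2 = (2 * L)⁻¹ ^ 2 * ‖G‖ ^ 2 := by
      rw [hw, norm_neg, norm_smul, Real.norm_eq_abs, abs_of_nonneg (by positivity), mul_pow]
    have key : fstar ≤ fbar - (2 * L)⁻¹ * ‖G‖ ^ 2 + L * ((2 * L)⁻¹ ^ 2 * ‖G‖ ^ 2) := by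
      have h0 : fstar ≤ (n : ℝ)⁻¹ * ∑ i, f i y := hxstar y
      have h1 : (n : ℝ)⁻¹ * ∑ i, f i y ≤ (n : ℝ)⁻¹ * (∑ i, f i xbar
          + ∑ i, ⟪gradient (f i) xbar, y - xbar⟫ + (n : ℝ) * (L * ‖y - xbar‖ ^ 2)) :=
        mul_le_mul_of_nonneg_left hsum (by positivity)
      have h2 : (n : ℝ)⁻¹ * (∑ i, f i xbar + ∑ i, ⟪gradient (f i) xbar, y - xbar⟫
          + (n : ℝ) * (L * ‖y - xbar‖ ^ 2))
          = fbar + (n : ℝ)⁻¹ * ∑ i, ⟪gradient (f i) xbar, y - xbar⟫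
            + L * ‖y - xbar‖ ^ 2 := by
        rw [hfbar]; field_simp
      rw [h2, hGw, hwn] at h1
      linarith
    have k2 : (2 * L)⁻¹ * ‖G‖ ^ 2 - L * ((2 * L)⁻¹ ^ 2 * ‖G‖ ^ 2) ≤ fbar - fstar := by
      linarith
    calc ‖G‖ ^ 2 = (4 * L) * ((2 * L)⁻¹ * ‖G‖ ^ 2 - L * ((2 * L)⁻¹ ^ 2 * ‖G‖ ^ 2)) := by
          field_simp; ring
      _ ≤ (4 * L) * (fbar - fstar) := mul_le_mul_of_nonneg_left k2 (by positivity)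
      _ = 4 * L * (fbar - fstar) := by ring
  -- Cauchy–Schwarz
  have hDv : -(‖D‖ * ‖v‖) ≤ ⟪D, v⟫ := neg_le_of_neg_le (by
    have := abs_real_inner_le_norm D v; rw [abs_le] at this; linarith [this.1])
  have hGv : -(‖G‖ * ‖v‖) ≤ ⟪G, v⟫ := neg_le_of_neg_le (by
    have := abs_real_inner_le_norm G v; rw [abs_le] at this; linarith [this.1])
  -- assemble
  rw [ge_iff_le, hsplit]
  have e1 : 2 * L * (L / (2 * (n : ℝ)) * S) = L ^ 2 / (n : ℝ) * S := by
    field_simp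
  have q1 : 2 * L * (‖D‖ * ‖v‖) ≤ ‖D‖ ^ 2 + L ^ 2 * ‖v‖ ^ 2 := by
    nlinarith [sq_nonneg (‖D‖ - L * ‖v‖)]
  have q2 : 8 * L * (‖G‖ * ‖v‖) ≤ ‖G‖ ^ 2 + 16 * L ^ 2 * ‖v‖ ^ 2 := by
    nlinarith [sq_nonneg (‖G‖ - 4 * L * ‖v‖)]
  have q3 : 2 * L * (-(‖D‖ * ‖v‖)) ≤ 2 * L * ⟪D, v⟫ :=
    mul_le_mul_of_nonneg_left hDv (by positivity)
  have q4 : 8 * L * (-(‖G‖ * ‖v‖)) ≤ 8 * L * ⟪G, v⟫ :=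
    mul_le_mul_of_nonneg_left hGv (by positivity)
  have hLv2 : (0:ℝ) ≤ L ^ 2 * ‖v‖ ^ 2 := by positivity
  have main : 2 * L * (-(L / (2 * (n : ℝ))) * S - (1 / 2) * (fbar - fstar)
      - 3 * L * ‖v‖ ^ 2) ≤ 2 * L * (⟪D, v⟫ + ⟪G, v⟫) := by
    have hD2' : 2 * L * ⟪D, v⟫ ≥ -(2 * L * (L / (2 * (n : ℝ)) * S)) - L ^ 2 * ‖v‖ ^ 2 := by
      nlinarith [q1, q3, hD2, e1]
    have hG2' : 8 * L * ⟪G, v⟫ ≥ -(4 * L * (fbar - fstar)) - 16 * L ^ 2 * ‖v‖ ^ 2 := by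
      nlinarith [q2, q4, hG2]
    nlinarith [hD2', hG2', hLv2]
  have := le_of_mul_le_mul_left main (by positivity : (0:ℝ) < 2 * L)
  linarith
end
end
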